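/- arXiv:1912.06301 — 2 statements merged into one kernel-verified Lean document; each statement's English description precedes it below -/
import Mathlib

section
/- With λ = (d+k+1, d+ℓ+1), 0 ≤ ℓ ≤ k, d ≥ 0, the derivative of H_λ(κ)/(κ-k) at κ = k, in the limit sense H'_λ(k) = lim_{κ→k} H_λ(κ)/(κ-k), equals (-1)^{ℓ+1} (k-ℓ)! (d+ℓ+1)! d! ℓ!. -/
noncomputable def ff (x : ℝ) (n : ℕ) : ℝ := ∏ i ∈ Finset.range n, (x - i)

noncomputable def Hpol (l1 l2 : ℕ) (κ : ℝ) : ℝ :=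
  ((l1 - l2).factorial : ℝ) * (l2.factorial : ℝ) * ff ((l1 : ℝ) - 1 - κ) l2

/-! Expanding the falling factorial as `ff x (d + 1 + l) = ff x d * (x - d) * ff (x - d - 1) l`
with `x = d + k - κ` exhibits `κ = k` as a simple root of `H_λ`; the cofactor is continuous, and at
`κ = k` it equals `-(k - l)! (d + l + 1)! · d! · (-1)^l l!`. -/

open Filter Topology Finset Polynomial

lemma ff_eq_eval_descPochhammer (x : ℝ) (n : ℕ) : ff x n = (descPochhammer ℝ n).eval x :=
  (descPochhammer_eval_eq_prod_range n x).symm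

@[fun_prop]
lemma continuous_ff (n : ℕ) : Continuous fun x => ff x n := by
  simpa only [ff_eq_eval_descPochhammer] using (descPochhammer ℝ n).continuous

lemma ff_succ (x : ℝ) (n : ℕ) : ff x (n + 1) = ff x n * (x - n) :=
  prod_range_succ _ _

lemma ff_add (x : ℝ) (m n : ℕ) : ff x (m + n) = ff x m * ff (x - m) n := by
  simp only [ff_eq_eval_descPochhammer, ← descPochhammer_mul, eval_mul, eval_comp, eval_sub,
    eval_X, eval_natCast]

lemma ff_natCast_self (n : ℕ) : ff n n = n.factorial := by
  rw [ff_eq_eval_descPochhammer, descPochhammer_eval_eq_descFactorial, Nat.descFactorial_self]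

lemma ff_neg_one (n : ℕ) : ff (-1) n = (-1) ^ n * n.factorial := by
  calc ff (-1) n = ∏ i ∈ range n, -1 * ((i : ℝ) + 1) := prod_congr rfl fun i _ => by ring
    _ = _ := by
      rw [prod_mul_distrib, prod_const, card_range, ← prod_range_add_one_eq_factorial,
        Nat.cast_prod]
      simp only [Nat.cast_add, Nat.cast_one]

lemma tendsto_div_sub_of_eq_sub_mul {f g : ℝ → ℝ} {a : ℝ} (hf : ∀ x, f x = (x - a) * g x)
    (hg : ContinuousAt g a) : Tendsto (fun x => f x / (x - a)) (𝓝[≠] a) (𝓝 (g a)) := by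
  refine (hg.tendsto.mono_left nhdsWithin_le_nhds).congr' ?_
  filter_upwards [self_mem_nhdsWithin] with x hx
  rw [hf, mul_div_cancel_left₀ _ (sub_ne_zero.2 hx)]

theorem stmt7_general (k l d : ℕ) :
    Filter.Tendsto (fun κ : ℝ => Hpol (d + k + 1) (d + l + 1) κ / (κ - k))
      (nhdsWithin (k : ℝ) {(k : ℝ)}ᶜ)
      (nhds ((-1 : ℝ) ^ (l + 1) * ((k - l).factorial : ℝ) * ((d + l + 1).factorial : ℝ) *
        (d.factorial : ℝ) * (l.factorial : ℝ))) := by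
  set C : ℝ := ((k - l).factorial : ℝ) * (d + l + 1).factorial
  have hfactor : ∀ κ : ℝ, Hpol (d + k + 1) (d + l + 1) κ =
      (κ - k) * -(C * ff (d + k - κ) d * ff (k - κ - 1) l) := by
    intro κ
    rw [Hpol, show d + k + 1 - (d + l + 1) = k - l by omega, show d + l + 1 = d + 1 + l by ring,
      ff_add, ff_succ]
    simp only [C]
    push_cast
    ring_nf
  have hcont : Continuous fun κ : ℝ => -(C * ff (d + k - κ) d * ff (k - κ - 1) l) := by
    fun_prop
  convert tendsto_div_sub_of_eq_sub_mul hfactor hcont.continuousAt using 2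
  rw [add_sub_cancel_right, sub_self, zero_sub, ff_natCast_self, ff_neg_one]
  ring

theorem stmt7 (k l d : ℕ) (hlk : l ≤ k) :
    Filter.Tendsto (fun κ : ℝ => Hpol (d + k + 1) (d + l + 1) κ / (κ - k))
      (nhdsWithin (k : ℝ) {(k : ℝ)}ᶜ)
      (nhds ((-1 : ℝ) ^ (l + 1) * ((k - l).factorial : ℝ) * ((d + l + 1).factorial : ℝ) *
        (d.factorial : ℝ) * (l.factorial : ℝ))) :=
  stmt7_general k l d
end

section
/- For a partition λ and a partition μ with |μ| ≤ |λ| and μ ≠ λ, the Knop–Sahi polynomial satisfies the vanishing property P^κ_λ(μ1 - κ - 1, μ2) = 0 as a rational function of κ. -/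
noncomputable def ffF (a : RatFunc ℚ) (n : ℕ) : RatFunc ℚ :=
  ∏ i ∈ Finset.range n, (a - (i : RatFunc ℚ))

noncomputable def KSfun (l1 l2 : ℕ) (κ x y : RatFunc ℚ) : RatFunc ℚ :=
  ∑ i ∈ Finset.range (l1 - l2 + 1), ∑ j ∈ Finset.range (l1 - l2 + 1 - i),
    ((l1 - l2).factorial : RatFunc ℚ) * ffF (κ + 1) (l1 - l2 - i) *
        ffF (κ + 1) (l1 - l2 - j) /
      ((i.factorial : RatFunc ℚ) * (j.factorial : RatFunc ℚ) *
        ((l1 - l2 - i - j).factorial : RatFunc ℚ) * ffF (κ + 1) (l1 - l2)) *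
      ffF x (l2 + i) * ffF y (l2 + j)

/-!
Write `n = λ₁ - λ₂`, `u = κ + 1` and `a^{(m)}` for `ffF a m`. After exchanging the two sums, the
sum over `i` for fixed `j` is a Chu–Vandermonde convolution of falling factorials and collapses to
`C(n,j) u^{(j)} x^{(λ₂)} (u + x - λ₂ - j)^{(n-j)}`. At `x = μ₁ - κ - 1` the argument
`u + x - λ₂ - j = μ₁ - λ₂ - j` no longer involves `κ`, and every term carries the factor
`(μ₁ - λ₂ - j)^{(n-j)} · μ₂^{(λ₂+j)}`. This vanishes: either `μ₂ < λ₂ + j`, or `μ₂ ≥ λ₂ + j`, which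
together with `|μ| ≤ |λ|` and `μ ≠ λ` forces `μ₁ < λ₁`, so that `μ₁ - λ₂ - j` is a natural number
below `n - j`.
-/

open Finset Polynomial Nat

lemma ffF_eq_smeval (a : RatFunc ℚ) (n : ℕ) : ffF a n = (descPochhammer ℤ n).smeval a := by
  induction n with
  | zero => simp [ffF]
  | succ n ih =>
    rw [ffF, prod_range_succ, ← ffF, ih, descPochhammer_succ_right, smeval_mul, smeval_sub,
      smeval_X, smeval_natCast]
    simp

lemma ffF_add (a : RatFunc ℚ) (p q : ℕ) : ffF a (p + q) = ffF a p * ffF (a - p) q := by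
  simp only [ffF, prod_range_add, cast_add, sub_sub]

lemma ffF_add_eq_sum (a b : RatFunc ℚ) (k : ℕ) :
    ffF (a + b) k = ∑ i ∈ range (k + 1), (k.choose i : RatFunc ℚ) * ffF a (k - i) * ffF b i := by
  rw [add_comm, ffF_eq_smeval, Ring.descPochhammer_smeval_add k (Commute.all b a),
    Nat.sum_antidiagonal_eq_sum_range_succ_mk]
  refine sum_congr rfl fun i _ => ?_
  rw [ffF_eq_smeval, ffF_eq_smeval]
  ring

lemma ffF_natCast_eq_zero_of_lt {m n : ℕ} (h : m < n) : ffF m n = 0 :=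
  prod_eq_zero (mem_range.mpr h) (sub_self _)

lemma factorial_div_eq_choose_mul_choose {K : Type*} [Field K] [CharZero K] {n i j : ℕ}
    (h : i + j ≤ n) :
    (n ! : K) / (i ! * j ! * (n - i - j)!) = n.choose j * (n - j).choose i := by
  rw [Nat.cast_choose K (by omega : j ≤ n), Nat.cast_choose K (by omega : i ≤ n - j),
    show n - i - j = n - j - i by omega]
  have hfac : ((n - j)! : K) ≠ 0 := cast_ne_zero.mpr (n - j).factorial_ne_zero
  field_simp

lemma sum_factorial_div_mul_ffF (u x : RatFunc ℚ) {n j : ℕ} (l : ℕ) (hj : j ≤ n) :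
    ∑ i ∈ range (n - j + 1), (n ! : RatFunc ℚ) / (i ! * j ! * (n - i - j)!) *
        ffF u (n - i) * ffF x (l + i)
      = n.choose j * ffF u j * ffF x l * ffF (u + x - l - j) (n - j) := by
  rw [show u + x - l - j = (u - j) + (x - l) by ring, ffF_add_eq_sum, mul_sum]
  refine sum_congr rfl fun i hi => ?_
  have hi : i ≤ n - j := by rw [mem_range] at hi; omega
  rw [factorial_div_eq_choose_mul_choose (by omega), show n - i = j + (n - j - i) by omega,
    ffF_add, ffF_add x l i]
  ring

lemma KSfun_eq_sum (l1 l2 : ℕ) (κ x y : RatFunc ℚ) :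
    KSfun l1 l2 κ x y = ∑ j ∈ range (l1 - l2 + 1),
      (l1 - l2).choose j * ffF (κ + 1) j * ffF (κ + 1) (l1 - l2 - j) * ffF x l2 /
        ffF (κ + 1) (l1 - l2) * (ffF (κ + 1 + x - l2 - j) (l1 - l2 - j) * ffF y (l2 + j)) := by
  rw [KSfun]
  set n := l1 - l2
  rw [sum_comm' (t' := range (n + 1)) (s' := fun j => range (n + 1 - j))
    (fun i j => by simp only [mem_range]; omega)]
  refine sum_congr rfl fun j hj => ?_
  have hj : j ≤ n := by rw [mem_range] at hj; omega
  rw [show n + 1 - j = n - j + 1 by omega]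
  calc _ = ∑ i ∈ range (n - j + 1), (n ! : RatFunc ℚ) / (i ! * j ! * (n - i - j)!) *
          ffF (κ + 1) (n - i) * ffF x (l2 + i) *
          (ffF (κ + 1) (n - j) * ffF y (l2 + j) / ffF (κ + 1) n) :=
        sum_congr rfl fun i _ => by ring
    _ = _ := by rw [← sum_mul, sum_factorial_div_mul_ffF _ _ _ hj]; ring

lemma ffF_sub_mul_ffF_eq_zero {l1 l2 m1 m2 : ℕ} (j : ℕ) (hm : m2 ≤ m1)
    (hsize : m1 + m2 ≤ l1 + l2) (hne : (m1, m2) ≠ (l1, l2)) :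
    ffF ((m1 : RatFunc ℚ) - l2 - j) (l1 - l2 - j) * ffF (m2 : RatFunc ℚ) (l2 + j) = 0 := by
  have hne : ¬(m1 = l1 ∧ m2 = l2) := fun h => hne (by rw [h.1, h.2])
  rcases le_or_gt (l2 + j) m2 with h | h
  · refine mul_eq_zero_of_left ?_ _
    rw [show (m1 : RatFunc ℚ) - l2 - j = (m1 - l2 - j : ℕ) by
      rw [Nat.cast_sub (by omega : j ≤ m1 - l2), Nat.cast_sub (by omega : l2 ≤ m1)]]
    exact ffF_natCast_eq_zero_of_lt (by omega)
  · exact mul_eq_zero_of_right _ (ffF_natCast_eq_zero_of_lt h)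

theorem stmt15_general (l1 l2 m1 m2 : ℕ) (hm : m2 ≤ m1)
    (hsize : m1 + m2 ≤ l1 + l2) (hne : (m1, m2) ≠ (l1, l2)) :
    KSfun l1 l2 RatFunc.X ((m1 : RatFunc ℚ) - RatFunc.X - 1) (m2 : RatFunc ℚ) = 0 := by
  rw [KSfun_eq_sum]
  refine sum_eq_zero fun j _ => ?_
  rw [show RatFunc.X + 1 + ((m1 : RatFunc ℚ) - RatFunc.X - 1) - (l2 : RatFunc ℚ) - (j : RatFunc ℚ)
      = (m1 : RatFunc ℚ) - (l2 : RatFunc ℚ) - (j : RatFunc ℚ) by ring,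
    ffF_sub_mul_ffF_eq_zero j hm hsize hne, mul_zero]

theorem stmt15 (l1 l2 m1 m2 : ℕ) (hl : l2 ≤ l1) (hm : m2 ≤ m1)
    (hsize : m1 + m2 ≤ l1 + l2) (hne : (m1, m2) ≠ (l1, l2)) :
    KSfun l1 l2 RatFunc.X ((m1 : RatFunc ℚ) - RatFunc.X - 1) (m2 : RatFunc ℚ) = 0 :=
  stmt15_general l1 l2 m1 m2 hm hsize hne
end
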